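/- Let Z be standard Gaussian, θ > 0, x ∈ ℝ, and B_n(x) = {Z ≥ √θ(b_n + x/a_n)} with a_n, b_n the Gaussian extreme-value constants. Then conditional on B_n(x), the random variable a_n(Z/√θ − b_n − x/a_n) converges in distribution to an exponential random variable with rate θ. -/

import Mathlib

open MeasureTheory ProbabilityTheory Real Filter Topology

/-- The scaling constant `a_n = √(2 log n)`. -/
noncomputable def aConst (n : ℕ) : ℝ := Real.sqrt (2 * Real.log n)

/-- The centering constant `b_n = √(2 log n) − log(4π log n)/(2√(2 log n))`. -/
noncomputable def bConst (n : ℕ) : ℝ :=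
  Real.sqrt (2 * Real.log n)
    - Real.log (4 * Real.pi * Real.log n) / (2 * Real.sqrt (2 * Real.log n))

/-!
Conditioning on `B_n(x)` turns the probability into a ratio `T(c₁)/T(c₀)` of Gaussian tails
`T(c) = ∫_c^∞ e^{-u²/2} du` at the thresholds `c_y = √θ (b_n + y/a_n)`, `y = x + t` and
`y = x`. Mills' ratio `T(c) ~ c⁻¹ e^{-c²/2}` reduces it to `(c₀/c₁) e^{-(c₁² - c₀²)/2}`, and
since `a_n → ∞` and `b_n/a_n → 1` we get `c₀/c₁ → 1` and `c₁² - c₀² → 2θt`.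
-/

open Set Asymptotics

noncomputable def gaussianTail (s : ℝ) : ℝ := ∫ u in Ioi s, exp (-(u ^ 2 / 2))

lemma integrableOn_exp_neg_sq_div_two (s : ℝ) :
    IntegrableOn (fun u : ℝ => exp (-(u ^ 2 / 2))) (Ioi s) := by
  have h := (integrable_exp_neg_mul_sq (b := 1 / 2) (by norm_num)).integrableOn (s := Ioi s)
  convert h using 3 with u
  ring

lemma integrableOn_one_add_inv_sq_mul_exp (s : ℝ) (hs : 0 < s) :
    IntegrableOn (fun u : ℝ => (1 + (u ^ 2)⁻¹) * exp (-(u ^ 2 / 2))) (Ioi s) := by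
  refine Integrable.mono' ((integrableOn_exp_neg_sq_div_two s).const_mul (1 + (s ^ 2)⁻¹))
    (by fun_prop) ?_
  filter_upwards [ae_restrict_mem measurableSet_Ioi] with u (hu : s < u)
  rw [Real.norm_of_nonneg (by positivity)]
  gcongr

/-- `-u⁻¹ e^{-u²/2}` is an antiderivative of `(1 + u⁻²) e^{-u²/2}`. -/
lemma integral_Ioi_one_add_inv_sq_mul_exp (s : ℝ) (hs : 0 < s) :
    ∫ u in Ioi s, (1 + (u ^ 2)⁻¹) * exp (-(u ^ 2 / 2)) = s⁻¹ * exp (-(s ^ 2 / 2)) := by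
  have hderiv : ∀ u ∈ Ici s, HasDerivAt (fun y : ℝ => -(y⁻¹ * exp (-(y ^ 2 / 2))))
      ((1 + (u ^ 2)⁻¹) * exp (-(u ^ 2 / 2))) u := by
    intro u hu
    have hu0 : u ≠ 0 := (hs.trans_le hu).ne'
    have hsq : HasDerivAt (fun y : ℝ => -(y ^ 2 / 2)) (-u) u := by
      simpa using ((hasDerivAt_pow 2 u).div_const 2).fun_neg
    refine ((hasDerivAt_inv hu0).fun_mul hsq.exp).fun_neg.congr_deriv ?_
    field_simp
    ring
  have hlim : Tendsto (fun u : ℝ => -(u⁻¹ * exp (-(u ^ 2 / 2)))) atTop (𝓝 0) := by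
    have hexp : Tendsto (fun u : ℝ => exp (-(u ^ 2 / 2))) atTop (𝓝 0) :=
      tendsto_exp_atBot.comp <| tendsto_neg_atTop_atBot.comp <|
        (tendsto_pow_atTop two_ne_zero).atTop_div_const two_pos
    simpa using (tendsto_inv_atTop_zero.mul hexp).neg
  rw [integral_Ioi_of_hasDerivAt_of_tendsto' hderiv
    (integrableOn_one_add_inv_sq_mul_exp s hs) hlim]
  ring

lemma gaussianTail_le (s : ℝ) (hs : 0 < s) : gaussianTail s ≤ s⁻¹ * exp (-(s ^ 2 / 2)) := by
  rw [← integral_Ioi_one_add_inv_sq_mul_exp s hs]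
  refine setIntegral_mono_on (integrableOn_exp_neg_sq_div_two s)
    (integrableOn_one_add_inv_sq_mul_exp s hs) measurableSet_Ioi fun u _ => ?_
  nlinarith [exp_pos (-(u ^ 2 / 2)), inv_nonneg.mpr (sq_nonneg u)]

lemma le_one_add_inv_sq_mul_gaussianTail (s : ℝ) (hs : 0 < s) :
    s⁻¹ * exp (-(s ^ 2 / 2)) ≤ (1 + (s ^ 2)⁻¹) * gaussianTail s := by
  rw [← integral_Ioi_one_add_inv_sq_mul_exp s hs, gaussianTail, ← integral_const_mul]
  refine setIntegral_mono_on (integrableOn_one_add_inv_sq_mul_exp s hs)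
    ((integrableOn_exp_neg_sq_div_two s).const_mul _) measurableSet_Ioi fun u (hu : s < u) => ?_
  gcongr

theorem gaussianTail_isEquivalent :
    gaussianTail ~[atTop] fun s => s⁻¹ * exp (-(s ^ 2 / 2)) := by
  refine isEquivalent_of_tendsto_one ?_
  have hlow : Tendsto (fun s : ℝ => (1 + (s ^ 2)⁻¹)⁻¹) atTop (𝓝 1) := by
    simpa using ((tendsto_pow_atTop (α := ℝ) two_ne_zero).inv_tendsto_atTop.const_add 1).inv₀
      (by norm_num)
  refine tendsto_of_tendsto_of_tendsto_of_le_of_le' hlow tendsto_const_nhds ?_ ?_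
  all_goals filter_upwards [eventually_gt_atTop 0] with s hs
  · rw [Pi.div_apply, le_div_iff₀ (by positivity), inv_mul_le_iff₀ (by positivity)]
    exact le_one_add_inv_sq_mul_gaussianTail s hs
  · rw [Pi.div_apply, div_le_one (by positivity)]
    exact gaussianTail_le s hs

theorem tendsto_gaussianTail_div {α : Type*} {l : Filter α} {c₀ c₁ : α → ℝ} {L : ℝ}
    (h₀ : Tendsto c₀ l atTop) (h₁ : Tendsto c₁ l atTop) (hdiv : Tendsto (c₀ / c₁) l (𝓝 1))
    (hsq : Tendsto (fun i => (c₁ i ^ 2 - c₀ i ^ 2) / 2) l (𝓝 L)) :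
    Tendsto (fun i => gaussianTail (c₁ i) / gaussianTail (c₀ i)) l (𝓝 (exp (-L))) := by
  have hequiv := (gaussianTail_isEquivalent.comp_tendsto h₁).div
    (gaussianTail_isEquivalent.comp_tendsto h₀)
  refine hequiv.symm.tendsto_nhds ?_
  have hlim := hdiv.mul ((continuous_exp.tendsto _).comp hsq.neg)
  rw [one_mul] at hlim
  refine hlim.congr' ?_
  filter_upwards [h₀.eventually_gt_atTop 0, h₁.eventually_gt_atTop 0] with i hi₀ hi₁
  simp only [Pi.div_apply, Function.comp_apply]
  rw [show -((c₁ i ^ 2 - c₀ i ^ 2) / 2) = -(c₁ i ^ 2 / 2) - -(c₀ i ^ 2 / 2) by ring, exp_sub]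
  field_simp

section Thresholds

variable {α : Type*} {l : Filter α} {a b : α → ℝ} {s : ℝ}

lemma tendsto_inv_sq_of_tendsto_atTop (ha : Tendsto a l atTop) :
    Tendsto (fun i => (a i ^ 2)⁻¹) l (𝓝 0) :=
  ((tendsto_pow_atTop two_ne_zero).comp ha).inv_tendsto_atTop

lemma tendsto_mul_add_div_atTop (ha : Tendsto a l atTop) (hba : Tendsto (b / a) l (𝓝 1))
    (hs : 0 < s) (y : ℝ) : Tendsto (fun i => s * (b i + y / a i)) l atTop := by
  have hfac : Tendsto (fun i => s * (b i / a i + y * (a i ^ 2)⁻¹)) l (𝓝 (s * (1 + y * 0))) :=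
    (hba.add ((tendsto_inv_sq_of_tendsto_atTop ha).const_mul y)).const_mul s
  rw [mul_zero, add_zero, mul_one] at hfac
  refine (ha.atTop_mul_pos hs hfac).congr' ?_
  filter_upwards [ha.eventually_gt_atTop 0] with i hi
  field_simp

lemma tendsto_mul_add_div_div (ha : Tendsto a l atTop) (hba : Tendsto (b / a) l (𝓝 1))
    (hs : 0 < s) (y z : ℝ) :
    Tendsto ((fun i => s * (b i + y / a i)) / fun i => s * (b i + z / a i)) l (𝓝 1) := by
  have hfac (w : ℝ) : Tendsto (fun i => b i / a i + w * (a i ^ 2)⁻¹) l (𝓝 1) := by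
    simpa using hba.add ((tendsto_inv_sq_of_tendsto_atTop ha).const_mul w)
  have hlim := (hfac y).div (hfac z) one_ne_zero
  rw [div_one] at hlim
  refine hlim.congr' ?_
  filter_upwards [ha.eventually_gt_atTop 0] with i hi
  simp only [Pi.div_apply]
  field_simp

lemma tendsto_sq_mul_add_div_sub_sq (ha : Tendsto a l atTop) (hba : Tendsto (b / a) l (𝓝 1))
    (y t : ℝ) :
    Tendsto (fun i => ((s * (b i + (y + t) / a i)) ^ 2 - (s * (b i + y / a i)) ^ 2) / 2) l
      (𝓝 (s ^ 2 * t)) := by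
  have hlim : Tendsto (fun i => s ^ 2 * (t * (b i / a i) + (2 * y + t) * t / 2 * (a i ^ 2)⁻¹))
      l (𝓝 (s ^ 2 * (t * 1 + (2 * y + t) * t / 2 * 0))) :=
    ((hba.const_mul t).add ((tendsto_inv_sq_of_tendsto_atTop ha).const_mul _)).const_mul _
  rw [mul_one, mul_zero, add_zero] at hlim
  refine hlim.congr' ?_
  filter_upwards [ha.eventually_gt_atTop 0] with i hi
  field_simp
  ring

lemma le_mul_sub_iff {a s : ℝ} (ha : 0 < a) (hs : 0 < s) (b y t z : ℝ) :
    t ≤ a * (z / s - b - y / a) ↔ s * (b + (y + t) / a) ≤ z := by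
  rw [← sub_nonneg, ← sub_nonneg (a := z),
    show a * (z / s - b - y / a) - t = a / s * (z - s * (b + (y + t) / a)) by field_simp; ring]
  exact mul_nonneg_iff_of_pos_left (by positivity)

end Thresholds

lemma tendsto_aConst_atTop : Tendsto aConst atTop atTop :=
  Real.tendsto_sqrt_atTop.comp <|
    (tendsto_log_atTop.comp tendsto_natCast_atTop_atTop).const_mul_atTop two_pos

lemma tendsto_bConst_div_aConst : Tendsto (bConst / aConst) atTop (𝓝 1) := by
  have hL : Tendsto (fun n : ℕ => Real.log n) atTop atTop :=
    tendsto_log_atTop.comp tendsto_natCast_atTop_atTop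
  have hlog : Tendsto (fun y : ℝ => Real.log (4 * π * y) / (4 * π * y) * π) atTop (𝓝 0) := by
    simpa using (isLittleO_log_id_atTop.tendsto_div_nhds_zero.comp
      (tendsto_id.const_mul_atTop (by positivity : 0 < 4 * π))).mul_const π
  have hlim := tendsto_const_nhds (x := (1 : ℝ)).sub (hlog.comp hL)
  rw [sub_zero] at hlim
  refine hlim.congr' ?_
  filter_upwards [hL.eventually_gt_atTop 0] with n hn
  have ha : 0 < aConst n := Real.sqrt_pos.mpr (by positivity)
  have ha2 : aConst n ^ 2 = 2 * Real.log n := Real.sq_sqrt (by positivity)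
  rw [Pi.div_apply, Function.comp_apply,
    show bConst n = aConst n - Real.log (4 * π * Real.log n) / (2 * aConst n) from rfl]
  field_simp
  rw [ha2]
  ring

lemma cond_apply_of_subset₀ {Ω : Type*} [MeasurableSpace Ω] {μ : Measure Ω} {s t : Set Ω}
    (hs : NullMeasurableSet s μ) (hts : t ⊆ s) : μ[t | s] = (μ s)⁻¹ * μ t := by
  rw [ProbabilityTheory.cond, Measure.smul_apply, Measure.restrict_apply₀' hs,
    inter_eq_left.mpr hts, smul_eq_mul]

lemma gaussianReal_Ici_toReal (r : ℝ) :
    (gaussianReal 0 1 (Ici r)).toReal = (√(2 * π))⁻¹ * gaussianTail r := by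
  rw [gaussianReal_apply_eq_integral 0 one_ne_zero, ENNReal.toReal_ofReal
    (integral_nonneg fun _ => gaussianPDFReal_nonneg _ _ _), integral_Ici_eq_integral_Ioi,
    gaussianTail, ← integral_const_mul]
  simp [gaussianPDFReal, neg_div]

theorem cond_le_toReal_eq_gaussianTail_div {Ω : Type*} [MeasurableSpace Ω] {P : Measure Ω}
    {Z : Ω → ℝ} (hZ : P.map Z = gaussianReal 0 1) {c₀ c₁ : ℝ} (hc : c₀ ≤ c₁) :
    (P[{ω | c₁ ≤ Z ω} | {ω | c₀ ≤ Z ω}]).toReal = gaussianTail c₁ / gaussianTail c₀ := by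
  have hZm : AEMeasurable Z P := by
    by_contra h
    rw [Measure.map_of_not_aemeasurable h] at hZ
    exact (IsProbabilityMeasure.ne_zero _) hZ.symm
  have hlaw (r : ℝ) : P {ω | r ≤ Z ω} = gaussianReal 0 1 (Ici r) := by
    rw [← hZ, Measure.map_apply_of_aemeasurable hZm measurableSet_Ici]
    rfl
  rw [cond_apply_of_subset₀ (s := {ω | c₀ ≤ Z ω}) (t := {ω | c₁ ≤ Z ω})
      (hZm.nullMeasurable measurableSet_Ici) fun ω h => hc.trans h,
    ENNReal.toReal_mul, ENNReal.toReal_inv, hlaw, hlaw, gaussianReal_Ici_toReal,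
    gaussianReal_Ici_toReal, ← div_eq_inv_mul, mul_div_mul_left _ _ (by positivity)]

theorem gaussian_conditional_exp_limit_general
    {Ω : Type*} [MeasurableSpace Ω] (P : Measure Ω)
    (Z : Ω → ℝ) (hZ : Measure.map Z P = gaussianReal 0 1)
    (θ : ℝ) (hθ : 0 < θ) (x : ℝ) :
    ∀ t : ℝ, 0 ≤ t →
      Tendsto
        (fun n : ℕ =>
          ((P[|{ω | Real.sqrt θ * (bConst n + x / aConst n) ≤ Z ω}])
            {ω | t ≤ aConst n * (Z ω / Real.sqrt θ - bConst n - x / aConst n)}).toReal)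
        atTop (𝓝 (Real.exp (-θ * t))) := by
  intro t ht
  have hs : 0 < √θ := Real.sqrt_pos.mpr hθ
  have ha := tendsto_aConst_atTop
  have hba := tendsto_bConst_div_aConst
  have hlim := tendsto_gaussianTail_div (tendsto_mul_add_div_atTop ha hba hs x)
    (tendsto_mul_add_div_atTop ha hba hs (x + t)) (tendsto_mul_add_div_div ha hba hs x (x + t))
    (tendsto_sq_mul_add_div_sub_sq ha hba x t)
  rw [Real.sq_sqrt hθ.le, ← neg_mul] at hlim
  refine hlim.congr' ?_
  filter_upwards [ha.eventually_gt_atTop 0] with n hn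
  simp_rw [le_mul_sub_iff hn hs]
  refine (cond_le_toReal_eq_gaussianTail_div hZ ?_).symm
  gcongr
  linarith

/-- For a standard Gaussian `Z`, `θ > 0`, `x ∈ ℝ` and
`B_n(x) = {Z ≥ √θ(b_n + x/a_n)}`, conditionally on `B_n(x)` the random
variable `a_n(Z/√θ − b_n − x/a_n)` converges in distribution to an `Exp(θ)`
random variable (equivalently, its conditional upper tail at each `t ≥ 0`
converges to `e^{−θt}`, and its CDF converges at every point). -/
theorem gaussian_conditional_exp_limit
    {Ω : Type*} [MeasurableSpace Ω] (P : Measure Ω) [IsProbabilityMeasure P]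
    (Z : Ω → ℝ) (hZ : Measure.map Z P = gaussianReal 0 1)
    (θ : ℝ) (hθ : 0 < θ) (x : ℝ) :
    ∀ t : ℝ, 0 ≤ t →
      Tendsto
        (fun n : ℕ =>
          ((P[|{ω | Real.sqrt θ * (bConst n + x / aConst n) ≤ Z ω}])
            {ω | t ≤ aConst n * (Z ω / Real.sqrt θ - bConst n - x / aConst n)}).toReal)
        atTop (𝓝 (Real.exp (-θ * t))) :=
  gaussian_conditional_exp_limit_general P Z hZ θ hθ x
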